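/- arXiv:1908.00607 — 3 statements merged into one kernel-verified Lean document; each statement's English description precedes it below -/
import Mathlib

section
/- Let R > 1, 0 < γ < 1 and 0 ≤ α < 1. There exists a constant C > 0, depending only on γ, α and R, such that for every (t₀,x₀) with t₀ ≥ 0 and t₀ + |x₀| < R, and every r̃ with 0 ≤ r̃ ≤ t₀, setting t = t₀ − r̃, one has ∫_{S²} ( (1−τ) u_*^γ + v_*^γ )^{−α} dσ(ω̃) ≤ C (R−t₀)^{−αγ}, where for each ω̃ ∈ S², at the point x = x₀+r̃ω̃ one sets u_* = R − t + |x|, v_* = R − t − |x|, and τ = (x·ω̃)/|x| (interpreted arbitrarily when x = 0). -/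
open MeasureTheory Real
open scoped ENNReal InnerProductSpace

noncomputable section

/-- Three-dimensional Euclidean space. -/
abbrev E3 : Type := EuclideanSpace ℝ (Fin 3)

/-- Second derivative of `f` at `x` in the direction `v`. -/
def der2 (f : E3 → ℝ) (x v : E3) : ℝ := fderiv ℝ (fun y => fderiv ℝ f y v) x v

/-- The (spatial) Laplacian on `ℝ³`. -/
def lap3 (f : E3 → ℝ) (x : E3) : ℝ :=
  ∑ i : Fin 3, der2 f x (EuclideanSpace.single i 1)

/-- First time derivative `∂_t φ`. -/
def dt1 (φ : ℝ → E3 → ℝ) (t : ℝ) (x : E3) : ℝ := deriv (fun s => φ s x) t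

/-- Second time derivative `∂_t² φ`. -/
def dtt (φ : ℝ → E3 → ℝ) (t : ℝ) (x : E3) : ℝ := deriv (fun s => dt1 φ s x) t

/-- `φ` is a smooth solution of the defocusing semilinear wave equation
`∂_t²φ − Δφ + |φ|^{p−1}φ = 0` on `[0,∞) × ℝ³`. -/
def IsNLWSolution (p : ℝ) (φ : ℝ → E3 → ℝ) : Prop :=
  ContDiff ℝ (⊤ : ℕ∞) (fun q : ℝ × E3 => φ q.1 q.2) ∧
    ∀ t : ℝ, 0 ≤ t → ∀ x : E3,
      dtt φ t x - lap3 (φ t) x + |φ t x| ^ (p - 1) * φ t x = 0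

/-- The weighted initial energy `E_{k,γ₀}[φ]`. -/
def wEnergy (p : ℝ) (k : ℕ) (γ₀ : ℝ) (φ : ℝ → E3 → ℝ) : ℝ≥0∞ :=
  (∑ l ∈ Finset.range (k + 1),
    ∫⁻ x : E3, ENNReal.ofReal ((1 + ‖x‖) ^ (γ₀ + 2 * (l : ℝ)) *
      (‖iteratedFDeriv ℝ (l + 1) (φ 0) x‖ ^ 2 + ‖iteratedFDeriv ℝ l (dt1 φ 0) x‖ ^ 2))) +
  ∫⁻ x : E3, ENNReal.ofReal ((1 + ‖x‖) ^ γ₀ * |φ 0 x| ^ (p + 1))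

/-- `u₊ = √(1+((t−r)/2)²)`. -/
def uplus (t r : ℝ) : ℝ := Real.sqrt (1 + ((t - r) / 2) ^ 2)

/-- `v₊ = √(1+((t+r)/2)²)`. -/
def vplus (t r : ℝ) : ℝ := Real.sqrt (1 + ((t + r) / 2) ^ 2)

/-- Surface measure on the unit sphere `S² ⊂ ℝ³` (total mass `4π`). -/
def sphereMeasure : Measure (Metric.sphere (0 : E3) 1) := (volume : Measure E3).toSphere


open scoped Pointwise

lemma E3_vol_le_box (b : OrthonormalBasis (Fin 3) ℝ E3) (S : Set E3) (I : Fin 3 → Set ℝ)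
    (hI : ∀ i, MeasurableSet (I i)) (h : ∀ x ∈ S, ∀ i, ⟪b i, x⟫_ℝ ∈ I i) :
    volume S ≤ ∏ i, volume (I i) := by
  have hmp : MeasurePreserving
      (fun x : E3 => (MeasurableEquiv.toLp 2 (Fin 3 → ℝ)).symm (b.repr x)) volume volume :=
    (EuclideanSpace.volume_preserving_symm_measurableEquiv_toLp (Fin 3)).comp b.measurePreserving_repr
  have hbox : MeasurableSet (Set.univ.pi I) := MeasurableSet.univ_pi hI
  have hsub : S ⊆ (fun x : E3 => (MeasurableEquiv.toLp 2 (Fin 3 → ℝ)).symm (b.repr x)) ⁻¹'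
      (Set.univ.pi I) := by
    intro x hx i _
    show b.repr x i ∈ I i
    rw [b.repr_apply_apply]; exact h x hx i
  calc volume S ≤ volume ((fun x : E3 => (MeasurableEquiv.toLp 2 (Fin 3 → ℝ)).symm (b.repr x)) ⁻¹'
      (Set.univ.pi I)) := measure_mono hsub
    _ = volume (Set.univ.pi I) := hmp.measure_preimage hbox.nullMeasurableSet
    _ = ∏ i, volume (I i) := volume_pi_pi I

lemma E3_parseval (b : OrthonormalBasis (Fin 3) ℝ E3) (x : E3) :
    ⟪b 0, x⟫_ℝ ^ 2 + ⟪b 1, x⟫_ℝ ^ 2 + ⟪b 2, x⟫_ℝ ^ 2 = ‖x‖ ^ 2 := by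
  have h : ‖x‖ ^ 2 = ∑ i, (b.repr x i) ^ 2 := by
    rw [← b.repr.norm_map x, EuclideanSpace.norm_eq, Real.sq_sqrt (by positivity)]
    simp [Real.norm_eq_abs, sq_abs]
  rw [h, Fin.sum_univ_three, b.repr_apply_apply, b.repr_apply_apply, b.repr_apply_apply]

lemma E3_exists_basis (e : E3) (he : ‖e‖ = 1) :
    ∃ b : OrthonormalBasis (Fin 3) ℝ E3, b 0 = e := by
  have hcard : Module.finrank ℝ E3 = Fintype.card (Fin 3) := by
    simp [finrank_euclideanSpace_fin]
  have horth : Orthonormal ℝ (Set.restrict {(0 : Fin 3)} (fun _ : Fin 3 => e)) := by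
    constructor
    · intro i; exact he
    · intro i j hij
      exfalso
      apply hij
      apply Subtype.ext
      have hi := i.2; have hj := j.2
      simp only [Set.mem_singleton_iff] at hi hj
      rw [hi, hj]
  obtain ⟨b, hb⟩ := horth.exists_orthonormalBasis_extension_of_card_eq hcard
  exact ⟨b, hb 0 rfl⟩

lemma E3_vol_cap (e : E3) (he : ‖e‖ = 1) {ε : ℝ} (hε0 : 0 ≤ ε) (hε1 : ε ≤ 1) :
    volume {x : E3 | ‖x‖ ≤ 1 ∧ (1 - ε) * ‖x‖ ≤ ⟪e, x⟫_ℝ} ≤ ENNReal.ofReal (8 * ε) := by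
  obtain ⟨b, hb0⟩ := E3_exists_basis e he
  set s : ℝ := Real.sqrt (2 * ε) with hs
  have hsnn : 0 ≤ s := Real.sqrt_nonneg _
  have key : ∀ x ∈ {x : E3 | ‖x‖ ≤ 1 ∧ (1 - ε) * ‖x‖ ≤ ⟪e, x⟫_ℝ}, ∀ i : Fin 3,
      ⟪b i, x⟫_ℝ ∈ (![Set.Icc 0 1, Set.Icc (-s) s, Set.Icc (-s) s] i) := by
    rintro x ⟨hx1, hx2⟩ i
    have hpar := E3_parseval b x
    rw [hb0] at hpar
    have hp2 : ⟪e, x⟫_ℝ ≤ ‖x‖ := by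
      calc ⟪e, x⟫_ℝ ≤ ‖e‖ * ‖x‖ := real_inner_le_norm e x
        _ = ‖x‖ := by rw [he, one_mul]
    have hn0 : (0:ℝ) ≤ ‖x‖ := norm_nonneg x
    have h0 : (0:ℝ) ≤ ⟪e, x⟫_ℝ := le_trans (by nlinarith) hx2
    have hpp : ((1-ε) * ‖x‖)^2 ≤ ⟪e, x⟫_ℝ^2 := by
      apply sq_le_sq' (by nlinarith) hx2
    have hq : ∀ y : ℝ, y ^ 2 ≤ 2 * ε → y ∈ Set.Icc (-s) s := by
      intro y hy
      have : |y| ≤ s := by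
        rw [← Real.sqrt_sq_eq_abs]; exact Real.sqrt_le_sqrt hy
      exact abs_le.mp this
    fin_cases i
    · show ⟪b 0, x⟫_ℝ ∈ Set.Icc (0:ℝ) 1
      rw [hb0]
      exact ⟨h0, le_trans hp2 hx1⟩
    · show ⟪b 1, x⟫_ℝ ∈ Set.Icc (-s) s
      exact hq _ (by nlinarith [sq_nonneg (⟪b 2, x⟫_ℝ), sq_nonneg (‖x‖)])
    · show ⟪b 2, x⟫_ℝ ∈ Set.Icc (-s) s
      exact hq _ (by nlinarith [sq_nonneg (⟪b 1, x⟫_ℝ), sq_nonneg (‖x‖)])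
  calc volume {x : E3 | ‖x‖ ≤ 1 ∧ (1 - ε) * ‖x‖ ≤ ⟪e, x⟫_ℝ}
      ≤ ∏ i, volume (![Set.Icc 0 1, Set.Icc (-s) s, Set.Icc (-s) s] i) :=
        E3_vol_le_box b _ _ (by intro i; fin_cases i <;> exact measurableSet_Icc) key
    _ = ENNReal.ofReal (8 * ε) := by
        rw [Fin.prod_univ_three]
        show volume (Set.Icc (0:ℝ) 1) * volume (Set.Icc (-s) s) * volume (Set.Icc (-s) s)
          = ENNReal.ofReal (8 * ε)
        rw [Real.volume_Icc, Real.volume_Icc,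
          ← ENNReal.ofReal_mul (by norm_num), ← ENNReal.ofReal_mul (by nlinarith)]
        congr 1
        have hss : s * s = 2 * ε := Real.mul_self_sqrt (by linarith)
        nlinarith [hss]

lemma E3_vol_ball : volume (Metric.ball (0:E3) 1) ≤ ENNReal.ofReal 8 := by
  set b := EuclideanSpace.basisFun (Fin 3) ℝ
  have key : ∀ x ∈ Metric.ball (0:E3) 1, ∀ i : Fin 3,
      ⟪(b : OrthonormalBasis (Fin 3) ℝ E3) i, x⟫_ℝ ∈ (fun _ : Fin 3 => Set.Icc (-1:ℝ) 1) i := by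
    intro x hx i
    have hx1 : ‖x‖ ≤ 1 := by
      have := mem_ball_zero_iff.mp hx; linarith
    have hb1 : ‖(b : OrthonormalBasis (Fin 3) ℝ E3) i‖ = 1 := b.orthonormal.1 i
    have : |⟪(b : OrthonormalBasis (Fin 3) ℝ E3) i, x⟫_ℝ| ≤ ‖x‖ := by
      calc |⟪(b : OrthonormalBasis (Fin 3) ℝ E3) i, x⟫_ℝ|
          ≤ ‖(b : OrthonormalBasis (Fin 3) ℝ E3) i‖ * ‖x‖ := abs_real_inner_le_norm _ _
        _ = ‖x‖ := by rw [hb1, one_mul]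
    have := abs_le.mp (le_trans this hx1)
    exact ⟨this.1, this.2⟩
  calc volume (Metric.ball (0:E3) 1) ≤ ∏ _i : Fin 3, volume (Set.Icc (-1:ℝ) 1) :=
        E3_vol_le_box b _ _ (fun _ => measurableSet_Icc) key
    _ = ENNReal.ofReal 8 := by
        rw [Fin.prod_univ_three, Real.volume_Icc]
        rw [← ENNReal.ofReal_mul (by norm_num), ← ENNReal.ofReal_mul (by norm_num)]
        norm_num

lemma E3_finrank : Module.finrank ℝ E3 = 3 := by simp [finrank_euclideanSpace_fin]

lemma sphere_univ_bound : sphereMeasure (Set.univ) ≤ ENNReal.ofReal 24 := by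
  rw [sphereMeasure, Measure.toSphere_apply_univ, E3_finrank]
  calc (3:ℕ) * volume (Metric.ball (0:E3) 1) ≤ (3:ℕ) * ENNReal.ofReal 8 :=
        mul_le_mul_right E3_vol_ball _
    _ = ENNReal.ofReal 24 := by
        rw [show ((3:ℕ):ℝ≥0∞) = ENNReal.ofReal 3 by simp, ← ENNReal.ofReal_mul (by norm_num)]
        norm_num

lemma sphere_cap_bound (e : E3) (he : ‖e‖ = 1) {ε : ℝ} (hε0 : 0 ≤ ε) (hε1 : ε ≤ 1) :
    sphereMeasure {ω : Metric.sphere (0:E3) 1 | 1 - ⟪e, (ω : E3)⟫_ℝ ≤ ε}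
      ≤ ENNReal.ofReal (24 * ε) := by
  have hAmeas : MeasurableSet {ω : Metric.sphere (0:E3) 1 | 1 - ⟪e, (ω : E3)⟫_ℝ ≤ ε} := by
    have hc : Continuous fun ω : Metric.sphere (0:E3) 1 => 1 - ⟪e, (ω : E3)⟫_ℝ :=
      continuous_const.sub (Continuous.inner continuous_const continuous_subtype_val)
    exact measurableSet_le hc.measurable measurable_const
  rw [sphereMeasure, Measure.toSphere_apply' _ hAmeas, E3_finrank]
  have hsub : Set.Ioo (0:ℝ) 1 • (Subtype.val '' {ω : Metric.sphere (0:E3) 1 | 1 - ⟪e, (ω : E3)⟫_ℝ ≤ ε})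
      ⊆ {x : E3 | ‖x‖ ≤ 1 ∧ (1 - ε) * ‖x‖ ≤ ⟪e, x⟫_ℝ} := by
    intro x hx
    rw [Set.mem_smul] at hx
    obtain ⟨r, hr, y, hy, rfl⟩ := hx
    obtain ⟨ω, hω, rfl⟩ := hy
    have hωn : ‖(ω : E3)‖ = 1 := norm_eq_of_mem_sphere ω
    have hrn : ‖r • (ω : E3)‖ = r := by
      rw [norm_smul, hωn, Real.norm_eq_abs, abs_of_pos hr.1, mul_one]
    constructor
    · rw [hrn]; exact hr.2.le
    · rw [hrn, real_inner_smul_right]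
      have : 1 - ε ≤ ⟪e, (ω:E3)⟫_ℝ := by have := hω; simp only [Set.mem_setOf_eq] at this; linarith
      nlinarith [hr.1]
  calc (3:ℕ) * volume (Set.Ioo (0:ℝ) 1 • (Subtype.val ''
        {ω : Metric.sphere (0:E3) 1 | 1 - ⟪e, (ω : E3)⟫_ℝ ≤ ε}))
      ≤ (3:ℕ) * ENNReal.ofReal (8 * ε) :=
        mul_le_mul_right (le_trans (measure_mono hsub) (E3_vol_cap e he hε0 hε1)) _
    _ = ENNReal.ofReal (24 * ε) := by
        rw [show ((3:ℕ):ℝ≥0∞) = ENNReal.ofReal 3 by simp, ← ENNReal.ofReal_mul (by norm_num)]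
        congr 1; ring

lemma slice_bound (e : E3) (he : ‖e‖ = 1) {α : ℝ} (hα0 : 0 ≤ α) (hα1 : α < 1) :
    ∫⁻ ω : Metric.sphere (0:E3) 1,
        ENNReal.ofReal ((min 1 (1 - ⟪e, (ω : E3)⟫_ℝ)) ^ (-α)) ∂sphereMeasure
      ≤ ENNReal.ofReal (24 * 2 ^ α * (1 - 2 ^ (α - 1))⁻¹) := by
  classical
  set g : Metric.sphere (0:E3) 1 → ℝ := fun ω => min 1 (1 - ⟪e, (ω : E3)⟫_ℝ) with hg
  have hgmeas : Measurable g := by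
    have hc : Continuous g :=
      continuous_const.min (continuous_const.sub
        (Continuous.inner continuous_const continuous_subtype_val))
    exact hc.measurable
  set A : ℕ → Set (Metric.sphere (0:E3) 1) := fun k => {ω | g ω ≤ (1/2 : ℝ) ^ k} with hA
  have hAmeas : ∀ k, MeasurableSet (A k) := fun k => measurableSet_le hgmeas measurable_const
  have hg1 : ∀ ω, g ω ≤ 1 := fun ω => min_le_left _ _
  have hgnn : ∀ ω, 0 ≤ g ω := by
    intro ω
    apply le_min zero_le_one
    have : |⟪e, (ω : E3)⟫_ℝ| ≤ 1 := by
      have := abs_real_inner_le_norm e (ω : E3)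
      rwa [he, norm_eq_of_mem_sphere ω, one_mul] at this
    linarith [(abs_le.mp this).2]
  have hpt : ∀ ω, ENNReal.ofReal (g ω ^ (-α)) ≤
      ∑' k : ℕ, Set.indicator (A k) (fun _ => ENNReal.ofReal ((2 ^ α) ^ (k + 1))) ω := by
    intro ω
    rcases eq_or_lt_of_le (hgnn ω) with hg0 | hg0
    · refine le_trans ?_ (ENNReal.le_tsum 0)
      have hmem : ω ∈ A 0 := by simp only [hA, Set.mem_setOf_eq, pow_zero]; linarith [hg1 ω]
      rw [Set.indicator_of_mem hmem]
      apply ENNReal.ofReal_le_ofReal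
      calc g ω ^ (-α) = (0:ℝ) ^ (-α) := by rw [← hg0]
        _ ≤ 1 := Real.zero_rpow_le_one _
        _ ≤ (2 ^ α) ^ (0 + 1) := by
            rw [pow_one]; exact Real.one_le_rpow one_le_two hα0
    · have hex : ∃ n : ℕ, (1/2 : ℝ) ^ n < g ω := exists_pow_lt_of_lt_one hg0 (by norm_num)
      set k₀ := Nat.find hex with hk₀
      have hspec : (1/2 : ℝ) ^ k₀ < g ω := Nat.find_spec hex
      have hk₀pos : k₀ ≠ 0 := by
        intro h
        rw [h, pow_zero] at hspec; linarith [hg1 ω]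
      set k := k₀ - 1 with hk
      have hkk : k + 1 = k₀ := Nat.succ_pred_eq_of_ne_zero hk₀pos
      have hupper : g ω ≤ (1/2 : ℝ) ^ k := by
        have := Nat.find_min hex (m := k) (by omega)
        linarith [not_lt.mp this]
      have hlower : (1/2 : ℝ) ^ (k+1) < g ω := by rw [hkk]; exact hspec
      refine le_trans ?_ (ENNReal.le_tsum k)
      rw [Set.indicator_of_mem (by simpa [hA] using hupper)]
      apply ENNReal.ofReal_le_ofReal
      have hposk : (0:ℝ) < (1/2 : ℝ) ^ (k+1) := by positivity
      calc g ω ^ (-α) ≤ ((1/2 : ℝ) ^ (k+1)) ^ (-α) :=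
            Real.rpow_le_rpow_of_nonpos hposk hlower.le (by linarith)
        _ = (2 ^ α) ^ (k + 1) := by
            rw [one_div, inv_pow, ← Real.rpow_natCast (2:ℝ) (k+1), ← Real.rpow_neg (by norm_num),
              ← Real.rpow_mul (by norm_num), ← Real.rpow_natCast ((2:ℝ) ^ α) (k+1),
              ← Real.rpow_mul (by norm_num)]
            ring_nf
  have hterm : ∀ k : ℕ, ENNReal.ofReal ((2 ^ α) ^ (k + 1)) * sphereMeasure (A k)
      ≤ ENNReal.ofReal (24 * 2 ^ α) * (ENNReal.ofReal ((2:ℝ) ^ (α - 1))) ^ k := by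
    intro k
    have hAk : sphereMeasure (A k) ≤ ENNReal.ofReal (24 * (1/2:ℝ)^k) := by
      rcases Nat.eq_zero_or_pos k with rfl | hkpos
      · calc sphereMeasure (A 0) ≤ sphereMeasure Set.univ := measure_mono (Set.subset_univ _)
          _ ≤ ENNReal.ofReal 24 := sphere_univ_bound
          _ = ENNReal.ofReal (24 * (1/2:ℝ)^0) := by norm_num
      · have hcap : A k ⊆ {ω : Metric.sphere (0:E3) 1 | 1 - ⟪e, (ω : E3)⟫_ℝ ≤ (1/2:ℝ)^k} := by
          intro ω hω
          have hωA : g ω ≤ (1/2:ℝ)^k := hω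
          have hlt1 : (1/2:ℝ)^k < 1 := by
            apply pow_lt_one₀ (by norm_num) (by norm_num)
            omega
          by_contra hcon
          simp only [Set.mem_setOf_eq, not_le] at hcon
          have : (1/2:ℝ)^k < min 1 (1 - ⟪e, (ω : E3)⟫_ℝ) := lt_min hlt1 hcon
          exact absurd hωA (not_le.mpr this)
        calc sphereMeasure (A k)
            ≤ sphereMeasure {ω : Metric.sphere (0:E3) 1 | 1 - ⟪e, (ω : E3)⟫_ℝ ≤ (1/2:ℝ)^k} :=
              measure_mono hcap
          _ ≤ ENNReal.ofReal (24 * (1/2:ℝ)^k) :=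
              sphere_cap_bound e he (by positivity) (by
                apply pow_le_one₀ (by norm_num) (by norm_num))
    calc ENNReal.ofReal ((2 ^ α) ^ (k + 1)) * sphereMeasure (A k)
        ≤ ENNReal.ofReal ((2 ^ α) ^ (k + 1)) * ENNReal.ofReal (24 * (1/2:ℝ)^k) :=
          mul_le_mul_right hAk _
      _ = ENNReal.ofReal (24 * 2 ^ α) * (ENNReal.ofReal ((2:ℝ) ^ (α - 1))) ^ k := by
          rw [← ENNReal.ofReal_mul (by positivity), ← ENNReal.ofReal_pow (by positivity),
            ← ENNReal.ofReal_mul (by positivity)]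
          congr 1
          have h21 : (2:ℝ)^(α-1) = 2^α * (1/2) := by
            rw [Real.rpow_sub (by norm_num), Real.rpow_one]; ring
          rw [h21, mul_pow, pow_succ]; ring
  have hq1 : (2:ℝ)^(α-1) < 1 := Real.rpow_lt_one_of_one_lt_of_neg one_lt_two (by linarith)
  have hq0 : (0:ℝ) < (2:ℝ)^(α-1) := Real.rpow_pos_of_pos two_pos _
  calc ∫⁻ ω, ENNReal.ofReal (g ω ^ (-α)) ∂sphereMeasure
      ≤ ∫⁻ ω, ∑' k : ℕ, Set.indicator (A k)
          (fun _ => ENNReal.ofReal ((2 ^ α) ^ (k + 1))) ω ∂sphereMeasure := lintegral_mono hpt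
    _ = ∑' k : ℕ, ∫⁻ ω, Set.indicator (A k)
          (fun _ => ENNReal.ofReal ((2 ^ α) ^ (k + 1))) ω ∂sphereMeasure :=
        lintegral_tsum (fun k => (measurable_const.indicator (hAmeas k)).aemeasurable)
    _ = ∑' k : ℕ, ENNReal.ofReal ((2 ^ α) ^ (k + 1)) * sphereMeasure (A k) :=
        tsum_congr (fun k => lintegral_indicator_const (hAmeas k) _)
    _ ≤ ∑' k : ℕ, ENNReal.ofReal (24 * 2 ^ α) * (ENNReal.ofReal ((2:ℝ) ^ (α - 1))) ^ k :=
        ENNReal.tsum_le_tsum hterm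
    _ = ENNReal.ofReal (24 * 2 ^ α) * (1 - ENNReal.ofReal ((2:ℝ) ^ (α - 1)))⁻¹ := by
        rw [ENNReal.tsum_mul_left, ENNReal.tsum_geometric]
    _ = ENNReal.ofReal (24 * 2 ^ α * (1 - 2 ^ (α - 1))⁻¹) := by
        rw [show (1:ℝ≥0∞) - ENNReal.ofReal ((2:ℝ) ^ (α - 1))
            = ENNReal.ofReal (1 - (2:ℝ) ^ (α - 1)) by
          rw [ENNReal.ofReal_sub _ hq0.le, ENNReal.ofReal_one],
          ← ENNReal.ofReal_inv_of_pos (by linarith), ← ENNReal.ofReal_mul (by positivity)]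

set_option maxHeartbeats 4000000 in
lemma key_real {γ d a c r' r : ℝ} (hγ0 : 0 < γ) (hγ1 : γ < 1) (hd : 0 < d) (ha0 : 0 ≤ a)
    (had : a < d) (hr'0 : 0 ≤ r') (hc : |c| ≤ a) (hr0 : 0 ≤ r)
    (hr2 : r ^ 2 = a ^ 2 + 2 * r' * c + r' ^ 2) (hrle : r ≤ a + r') :
    d ^ γ / 16 * min 1 (1 - c / a) ≤
      (1 - (c + r') / r) * (d + r' + r) ^ γ + (d + r' - r) ^ γ := by
  obtain ⟨hca1, hca2⟩ := abs_le.mp hc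
  have hdγ : (0:ℝ) < d ^ γ := Real.rpow_pos_of_pos hd γ
  have hm1 : min 1 (1 - c / a) ≤ 1 := min_le_left _ _
  have hm0 : 0 ≤ min 1 (1 - c / a) := by
    rcases eq_or_lt_of_le ha0 with h | h
    · have hc0 : c = 0 := by rw [← h] at hc; simpa using hc
      simp [hc0, ← h]
    · apply le_min zero_le_one
      have : c / a ≤ 1 := by rw [div_le_one h]; exact hca2
      linarith
  have hv0 : (0:ℝ) < d + r' - r := by linarith
  have hvγ0 : (0:ℝ) ≤ (d + r' - r) ^ γ := Real.rpow_nonneg (by linarith) _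
  have huγ : d ^ γ ≤ (d + r' + r) ^ γ := Real.rpow_le_rpow hd.le (by linarith) hγ0.le
  have hb2 : (c + r') ^ 2 ≤ r ^ 2 := by nlinarith
  have hble : c + r' ≤ r := by
    rcases le_or_gt (c + r') 0 with h | h
    · linarith
    · nlinarith
  have hτ0 : 0 ≤ 1 - (c + r') / r := by
    rcases eq_or_lt_of_le hr0 with h | h
    · rw [← h]; simp
    · have : (c + r') / r ≤ 1 := by rw [div_le_one h]; exact hble
      linarith
  rcases le_or_gt d (d + r' - r) with hA | hB
  · -- v ≥ d
    have h1 : d ^ γ ≤ (d + r' - r) ^ γ := Real.rpow_le_rpow hd.le hA hγ0.le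
    have h2 : (0:ℝ) ≤ (1 - (c + r') / r) * (d + r' + r) ^ γ :=
      mul_nonneg hτ0 (Real.rpow_nonneg (by linarith) _)
    nlinarith
  · -- v < d
    have hrr' : r' < r := by linarith
    have hrpos : (0:ℝ) < r := lt_of_le_of_lt hr'0 hrr'
    suffices hsuff : min 1 (1 - c / a) / 16 ≤ (1 - (c + r') / r) + (d + r' - r) / d by
      have hvγ : d ^ γ * ((d + r' - r) / d) ≤ (d + r' - r) ^ γ := by
        have hx0 : (0:ℝ) < (d + r' - r) / d := div_pos hv0 hd
        have hx1 : (d + r' - r) / d ≤ 1 := by rw [div_le_one hd]; linarith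
        have h1 : ((d + r' - r) / d) ^ (1:ℝ) ≤ ((d + r' - r) / d) ^ γ :=
          Real.rpow_le_rpow_of_exponent_ge hx0 hx1 hγ1.le
        rw [Real.rpow_one] at h1
        calc d ^ γ * ((d + r' - r) / d) ≤ d ^ γ * ((d + r' - r) / d) ^ γ :=
              mul_le_mul_of_nonneg_left h1 hdγ.le
          _ = (d * ((d + r' - r) / d)) ^ γ := (Real.mul_rpow hd.le hx0.le).symm
          _ = (d + r' - r) ^ γ := by rw [mul_div_cancel₀ _ hd.ne']
      calc d ^ γ / 16 * min 1 (1 - c / a) = d ^ γ * (min 1 (1 - c / a) / 16) := by ring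
        _ ≤ d ^ γ * ((1 - (c + r') / r) + (d + r' - r) / d) :=
            mul_le_mul_of_nonneg_left hsuff hdγ.le
        _ = (1 - (c + r') / r) * d ^ γ + d ^ γ * ((d + r' - r) / d) := by ring
        _ ≤ (1 - (c + r') / r) * (d + r' + r) ^ γ + (d + r' - r) ^ γ :=
            add_le_add (mul_le_mul_of_nonneg_left huγ hτ0) hvγ
    have hvd0 : 0 ≤ (d + r' - r) / d := div_nonneg hv0.le hd.le
    rcases le_or_gt (c + r') (r / 2) with hB1 | hB2
    · -- b ≤ r/2
      have : (c + r') / r ≤ 1 / 2 := by rw [div_le_iff₀ hrpos]; linarith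
      linarith
    · -- b > r/2
      rcases le_or_gt a (d / 2) with hB2a | hB2b
      · -- a small : v ≥ d - a ≥ d/2
        have : 1 / 2 ≤ (d + r' - r) / d := by rw [le_div_iff₀ hd]; linarith
        linarith
      · have ha' : (0:ℝ) < a := by linarith
        have hmle : min 1 (1 - c / a) ≤ (a - c) / a := by
          have h : 1 - c / a = (a - c) / a := by field_simp
          rw [← h]; exact min_le_right _ _
        have hac0 : 0 ≤ a - c := by linarith
        rcases le_or_gt a (2 * r') with hcase1 | hcase2
        · -- r' large: v ≥ (a-c)/3
          have hr'pos : (0:ℝ) < r' := by linarith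
          have hprod : (a + r' - r) * (a + r' + r) = 2 * r' * (a - c) := by nlinarith
          have h6 : a + r' + r ≤ 6 * r' := by linarith
          have h0arr : 0 ≤ a + r' - r := by linarith
          have hm6 : (a + r' - r) * (a + r' + r) ≤ (a + r' - r) * (6 * r') :=
            mul_le_mul_of_nonneg_left h6 h0arr
          have h3' : a - c ≤ 3 * (a + r' - r) := by nlinarith [hm6, hprod, hr'pos]
          have hkey : (a - c) / 3 ≤ d + r' - r := by linarith
          have h1 : min 1 (1 - c / a) / 16 ≤ (a - c) / (16 * a) := by
            calc min 1 (1 - c / a) / 16 ≤ ((a - c) / a) / 16 := by linarith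
              _ = (a - c) / (16 * a) := by ring
          have h2 : (a - c) / (16 * a) ≤ (a - c) / (3 * d) := by
            rw [div_le_div_iff₀ (by linarith) (by linarith)]
            nlinarith [mul_nonneg hac0 hd.le, mul_nonneg hac0 (by linarith : (0:ℝ) ≤ 2 * a - d)]
          have h3 : (a - c) / (3 * d) ≤ (d + r' - r) / d := by
            rw [div_le_div_iff₀ (by linarith) hd]
            nlinarith [mul_le_mul_of_nonneg_right
              (show a - c ≤ 3 * (d + r' - r) by linarith) hd.le]
          linarith
        · -- r' small: 1 - τ ≥ (a-c)/(9a)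
          have hr32 : r < 3 * a / 2 := by linarith
          have hbpos : (0:ℝ) < c + r' := by linarith
          have hrb : (r - (c + r')) * (r + (c + r')) = (a - c) * (a + c) := by nlinarith
          have hrbpos : (0:ℝ) < r + (c + r') := by linarith
          have hacpos : a / 2 < a + c := by linarith
          have hr2' : r ^ 2 ≤ (3 * a / 2) ^ 2 := by nlinarith
          have p1 : r * (c + r') ≤ r * r := mul_le_mul_of_nonneg_left hble hr0
          have p2 : 9 * a * (a / 2) ≤ 9 * a * (a + c) :=
            mul_le_mul_of_nonneg_left hacpos.le (by linarith)
          have hstep : r * (r + (c + r')) ≤ 9 * a * (a + c) := by nlinarith [p1, p2, hr2']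
          have h1τ : (a - c) / (9 * a) ≤ 1 - (c + r') / r := by
            have h : 1 - (c + r') / r = (r - (c + r')) / r := by field_simp
            rw [h, div_le_div_iff₀ (by linarith) hrpos]
            have hmul : (a - c) * (r * (r + (c + r'))) ≤ (a - c) * (9 * a * (a + c)) :=
              mul_le_mul_of_nonneg_left hstep hac0
            have hmul2 : (a - c) * (9 * a * (a + c)) = (r - (c + r')) * (9 * a) * (r + (c + r')) := by
              linear_combination (9 * a) * hrb.symm
            have hXB : ((a - c) * r) * (r + (c + r')) ≤ ((r - (c + r')) * (9 * a)) * (r + (c + r')) := by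
              nlinarith [hmul, hmul2]
            exact le_of_mul_le_mul_right hXB hrbpos
          have h1 : min 1 (1 - c / a) / 16 ≤ (a - c) / (9 * a) := by
            have e1 : ((a - c) / a) / 16 = (a - c) / (16 * a) := by ring
            have e2 : (a - c) / (16 * a) ≤ (a - c) / (9 * a) := by
              rw [div_le_div_iff₀ (by linarith) (by linarith)]
              nlinarith [mul_nonneg hac0 ha0]
            linarith [hmle]
          linarith


set_option maxHeartbeats 1000000 in
/-- Sphere integration lemma on the truncated cone: for `R > 1`,
`0 < γ < 1` and `0 ≤ α < 1` there is `C > 0` such that for `t₀ ≥ 0`,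
`t₀ + |x₀| < R`, `0 ≤ r̃ ≤ t₀` and `t = t₀ − r̃`,
`∫_{S²} ((1−τ)u_*^γ + v_*^γ)^{−α} dσ ≤ C (R−t₀)^{−αγ}`. -/
theorem sphere_integration_cone_weighted (R γ α : ℝ) (hR : 1 < R)
    (hγ0 : 0 < γ) (hγ1 : γ < 1) (hα0 : 0 ≤ α) (hα1 : α < 1) :
    ∃ C : ℝ, 0 < C ∧ ∀ (t₀ : ℝ) (x₀ : E3) (r' : ℝ), 0 ≤ t₀ → t₀ + ‖x₀‖ < R →
      0 ≤ r' → r' ≤ t₀ →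
      (∫⁻ ω : Metric.sphere (0 : E3) 1,
        ENNReal.ofReal
          (((1 - ⟪x₀ + r' • (ω : E3), (ω : E3)⟫_ℝ / ‖x₀ + r' • (ω : E3)‖)
              * (R - (t₀ - r') + ‖x₀ + r' • (ω : E3)‖) ^ γ
            + (R - (t₀ - r') - ‖x₀ + r' • (ω : E3)‖) ^ γ) ^ (-α)) ∂sphereMeasure)
        ≤ ENNReal.ofReal (C * (R - t₀) ^ (-(α * γ))) := by
  have hq1 : (2:ℝ) ^ (α - 1) < 1 := Real.rpow_lt_one_of_one_lt_of_neg one_lt_two (by linarith)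
  set K₂ : ℝ := 24 * 2 ^ α * (1 - 2 ^ (α - 1))⁻¹ with hK₂
  have hK₂0 : 0 < K₂ := by
    apply mul_pos (by positivity)
    exact inv_pos.mpr (by linarith)
  refine ⟨16 ^ α * K₂, mul_pos (Real.rpow_pos_of_pos (by norm_num) _) hK₂0, ?_⟩
  intro t₀ x₀ r' ht₀ hlt hr'0 hr't₀
  classical
  set d : ℝ := R - t₀ with hdd
  have hx₀n : (0:ℝ) ≤ ‖x₀‖ := norm_nonneg _
  have hd : 0 < d := by rw [hdd]; linarith
  have had : ‖x₀‖ < d := by rw [hdd]; linarith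
  set e : E3 := if x₀ = 0 then EuclideanSpace.single 0 1 else ‖x₀‖⁻¹ • x₀ with he_def
  have he : ‖e‖ = 1 := by
    rw [he_def]; split_ifs with h
    · simp [EuclideanSpace.norm_single]
    · rw [norm_smul, norm_inv, norm_norm, inv_mul_cancel₀ (norm_ne_zero_iff.mpr h)]
  have hN : sphereMeasure {ω : Metric.sphere (0:E3) 1 | 1 - ⟪e, (ω : E3)⟫_ℝ ≤ 0} = 0 := by
    refine le_antisymm ?_ zero_le
    have := sphere_cap_bound e he (le_refl (0:ℝ)) zero_le_one
    simpa using this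
  have hae : ∀ᵐ (ω : Metric.sphere (0:E3) 1) ∂sphereMeasure, (0:ℝ) < 1 - ⟪e, (ω : E3)⟫_ℝ := by
    rw [ae_iff]
    refine measure_mono_null ?_ hN
    intro ω hω
    simpa using hω
  set K₁ : ℝ := 16 ^ α * d ^ (-(α * γ)) with hK₁
  have hK₁0 : 0 ≤ K₁ := by positivity
  have hbound : ∀ᵐ (ω : Metric.sphere (0:E3) 1) ∂sphereMeasure,
      ENNReal.ofReal
          (((1 - ⟪x₀ + r' • (ω : E3), (ω : E3)⟫_ℝ / ‖x₀ + r' • (ω : E3)‖)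
              * (R - (t₀ - r') + ‖x₀ + r' • (ω : E3)‖) ^ γ
            + (R - (t₀ - r') - ‖x₀ + r' • (ω : E3)‖) ^ γ) ^ (-α))
        ≤ ENNReal.ofReal K₁ * ENNReal.ofReal ((min 1 (1 - ⟪e, (ω : E3)⟫_ℝ)) ^ (-α)) := by
    filter_upwards [hae] with ω hω
    set c : ℝ := ⟪x₀, (ω : E3)⟫_ℝ with hcdef
    set r : ℝ := ‖x₀ + r' • (ω : E3)‖ with hrdef
    have hωn : ‖(ω : E3)‖ = 1 := norm_eq_of_mem_sphere ω
    have hc : |c| ≤ ‖x₀‖ := by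
      rw [hcdef]
      calc |⟪x₀, (ω : E3)⟫_ℝ| ≤ ‖x₀‖ * ‖(ω : E3)‖ := abs_real_inner_le_norm _ _
        _ = ‖x₀‖ := by rw [hωn, mul_one]
    have hrsmul : ‖r' • (ω : E3)‖ = r' := by
      rw [norm_smul, hωn, Real.norm_eq_abs, abs_of_nonneg hr'0, mul_one]
    have hr2 : r ^ 2 = ‖x₀‖ ^ 2 + 2 * r' * c + r' ^ 2 := by
      rw [hrdef, norm_add_sq_real, real_inner_smul_right, hrsmul]
      ring
    have hrle : r ≤ ‖x₀‖ + r' := by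
      rw [hrdef]
      calc ‖x₀ + r' • (ω : E3)‖ ≤ ‖x₀‖ + ‖r' • (ω : E3)‖ := norm_add_le _ _
        _ = ‖x₀‖ + r' := by rw [hrsmul]
    have hinner : ⟪x₀ + r' • (ω : E3), (ω : E3)⟫_ℝ = c + r' := by
      rw [inner_add_left, real_inner_smul_left, real_inner_self_eq_norm_mul_norm, hωn]
      ring
    have hbase : R - (t₀ - r') = d + r' := by rw [hdd]; ring
    have hKR := key_real hγ0 hγ1 hd hx₀n had hr'0 hc (norm_nonneg _) hr2 hrle
    -- relate the two `min`s
    have hmle : min 1 (1 - ⟪e, (ω : E3)⟫_ℝ) ≤ min 1 (1 - c / ‖x₀‖) := by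
      rw [he_def]; split_ifs with h
      · have : c = 0 := by rw [hcdef, h]; exact inner_zero_left _
        rw [this, zero_div, sub_zero, min_self]
        exact min_le_left _ _
      · have : ⟪(‖x₀‖⁻¹ • x₀ : E3), (ω : E3)⟫_ℝ = c / ‖x₀‖ := by
          rw [real_inner_smul_left, ← hcdef, div_eq_inv_mul]
        rw [this]
    have hmpos : 0 < min 1 (1 - ⟪e, (ω : E3)⟫_ℝ) := lt_min one_pos hω
    have hq : 0 < d ^ γ / 16 * min 1 (1 - ⟪e, (ω : E3)⟫_ℝ) :=
      mul_pos (by positivity) hmpos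
    have hPpos : d ^ γ / 16 * min 1 (1 - ⟪e, (ω : E3)⟫_ℝ) ≤
        (1 - ⟪x₀ + r' • (ω : E3), (ω : E3)⟫_ℝ / ‖x₀ + r' • (ω : E3)‖)
            * (R - (t₀ - r') + ‖x₀ + r' • (ω : E3)‖) ^ γ
          + (R - (t₀ - r') - ‖x₀ + r' • (ω : E3)‖) ^ γ := by
      rw [hinner, hbase, ← hrdef]
      calc d ^ γ / 16 * min 1 (1 - ⟪e, (ω : E3)⟫_ℝ)
          ≤ d ^ γ / 16 * min 1 (1 - c / ‖x₀‖) :=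
            mul_le_mul_of_nonneg_left hmle (by positivity)
        _ ≤ (1 - (c + r') / r) * (d + r' + r) ^ γ + (d + r' - r) ^ γ := hKR
    rw [← ENNReal.ofReal_mul hK₁0]
    apply ENNReal.ofReal_le_ofReal
    calc ((1 - ⟪x₀ + r' • (ω : E3), (ω : E3)⟫_ℝ / ‖x₀ + r' • (ω : E3)‖)
              * (R - (t₀ - r') + ‖x₀ + r' • (ω : E3)‖) ^ γ
            + (R - (t₀ - r') - ‖x₀ + r' • (ω : E3)‖) ^ γ) ^ (-α)
        ≤ (d ^ γ / 16 * min 1 (1 - ⟪e, (ω : E3)⟫_ℝ)) ^ (-α) :=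
          Real.rpow_le_rpow_of_nonpos hq hPpos (by linarith)
      _ = K₁ * (min 1 (1 - ⟪e, (ω : E3)⟫_ℝ)) ^ (-α) := by
          rw [Real.mul_rpow (by positivity) hmpos.le]
          congr 1
          rw [show d ^ γ / 16 = d ^ γ * (16:ℝ)⁻¹ by ring,
            Real.mul_rpow (by positivity) (by norm_num)]
          have h1 : ((16:ℝ)⁻¹) ^ (-α) = 16 ^ α := by
            rw [← Real.rpow_neg_one (16:ℝ), ← Real.rpow_mul (by norm_num)]
            norm_num
          have h2 : (d ^ γ) ^ (-α) = d ^ (-(α * γ)) := by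
            rw [← Real.rpow_mul hd.le, show γ * (-α) = -(α * γ) by ring]
          rw [h1, h2, hK₁]
          ring
  calc (∫⁻ ω : Metric.sphere (0 : E3) 1,
        ENNReal.ofReal
          (((1 - ⟪x₀ + r' • (ω : E3), (ω : E3)⟫_ℝ / ‖x₀ + r' • (ω : E3)‖)
              * (R - (t₀ - r') + ‖x₀ + r' • (ω : E3)‖) ^ γ
            + (R - (t₀ - r') - ‖x₀ + r' • (ω : E3)‖) ^ γ) ^ (-α)) ∂sphereMeasure)
      ≤ ∫⁻ ω : Metric.sphere (0 : E3) 1,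
          ENNReal.ofReal K₁ *
            ENNReal.ofReal ((min 1 (1 - ⟪e, (ω : E3)⟫_ℝ)) ^ (-α)) ∂sphereMeasure :=
        lintegral_mono_ae hbound
    _ = ENNReal.ofReal K₁ * ∫⁻ ω : Metric.sphere (0 : E3) 1,
          ENNReal.ofReal ((min 1 (1 - ⟪e, (ω : E3)⟫_ℝ)) ^ (-α)) ∂sphereMeasure :=
        lintegral_const_mul' _ _ ENNReal.ofReal_ne_top
    _ ≤ ENNReal.ofReal K₁ * ENNReal.ofReal K₂ :=
        mul_le_mul_right (slice_bound e he hα0 hα1) _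
    _ ≤ ENNReal.ofReal (16 ^ α * K₂ * (R - t₀) ^ (-(α * γ))) := by
        rw [← ENNReal.ofReal_mul hK₁0]
        apply ENNReal.ofReal_le_ofReal
        rw [hK₁, ← hdd]
        ring_nf
        exact le_refl _
end
end

section
/- Let 1 < γ ≤ 2 and let u, v ∈ ℝ satisfy |u| ≤ v. Then (1+v²)^{γ/2} − (1+u²)^{γ/2} ≥ (γ/2)(v−u) ( v(1+v²)^{γ/2−1} + u(1+u²)^{γ/2−1} ). Equivalently, with f(s) = (1+s²)^{γ/2}, the difference quotient (f(v)−f(u))/(v−u) is at least the average (f'(u)+f'(v))/2 of the endpoint derivatives whenever −v ≤ u < v. -/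
open Real Set

/-!
With `f s = (1 + s²)^p`, the derivative `f' s = 2p s (1 + s²)^(p-1)` is concave on `[0, ∞)` for
`1/2 ≤ p ≤ 1`, so on `[u, v] ⊆ [0, ∞)` it lies above its chord, and integrating gives the
trapezoid bound `(v - u)(f' u + f' v)/2 ≤ f v - f u`. For `u < 0`, since `f` is even and `f'` is
odd, the bound for `[-u, v]` implies the one for `[u, v]` because `(1 + s²)^(p-1)` decreases.
-/

theorem ConcaveOn.trapezoid_le_sub {f f' : ℝ → ℝ} {a b : ℝ} (hab : a ≤ b)
    (hf : ∀ x ∈ Icc a b, HasDerivAt f (f' x) x) (hf' : ConcaveOn ℝ (Icc a b) f') :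
    (b - a) * (f' a + f' b) / 2 ≤ f b - f a := by
  rcases hab.eq_or_lt with rfl | hab
  · simp
  -- `f` minus an antiderivative of the chord of `f'` is monotone, since `f'` lies above its chord.
  set g : ℝ → ℝ := fun t ↦ f t - f' a * (t - a) - (f' b - f' a) * (t - a) ^ 2 / (2 * (b - a))
  have hg : ∀ t ∈ Icc a b,
      HasDerivAt g (f' t - f' a - (f' b - f' a) * (t - a) / (b - a)) t := by
    intro t ht
    refine (((hf t ht).sub (((hasDerivAt_id' t).sub_const a).const_mul (f' a))).sub
      (((((hasDerivAt_id' t).sub_const a).pow 2).const_mul (f' b - f' a)).div_const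
        (2 * (b - a)))).congr_deriv ?_
    field_simp
    ring
  have hmono : MonotoneOn g (Icc a b) := by
    refine monotoneOn_of_hasDerivWithinAt_nonneg (convex_Icc a b)
      (fun t ht ↦ (hg t ht).continuousAt.continuousWithinAt)
      (fun t ht ↦ (hg t (interior_subset ht)).hasDerivWithinAt) fun t ht ↦ ?_
    rw [interior_Icc] at ht
    have hchord := hf'.neg.secant_mono_aux1 (left_mem_Icc.2 hab.le) (right_mem_Icc.2 hab.le)
      ht.1 ht.2
    simp only [Pi.neg_apply] at hchord
    rw [sub_sub, sub_nonneg, ← le_sub_iff_add_le', div_le_iff₀ (sub_pos.2 hab)]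
    linarith
  have := hmono (left_mem_Icc.2 hab.le) (right_mem_Icc.2 hab.le) hab.le
  have hhalf : (f' b - f' a) * (b - a) ^ 2 / (2 * (b - a)) = (f' b - f' a) * (b - a) / 2 := by
    field_simp [(sub_pos.2 hab).ne']
  simp only [g, sub_self, mul_zero, ne_eq, OfNat.ofNat_ne_zero, not_false_eq_true, zero_pow,
    zero_div, sub_zero, hhalf] at this
  linarith

lemma hasDerivAt_one_add_sq_rpow (p s : ℝ) :
    HasDerivAt (fun t : ℝ ↦ (1 + t ^ 2) ^ p) (2 * p * s * (1 + s ^ 2) ^ (p - 1)) s := by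
  refine (((hasDerivAt_pow 2 s).const_add 1).rpow_const (p := p)
    (Or.inl (by positivity))).congr_deriv ?_
  simp only [Nat.cast_ofNat]
  ring

lemma antitoneOn_one_add_sq_rpow {p : ℝ} (hp : p ≤ 0) :
    AntitoneOn (fun s : ℝ ↦ (1 + s ^ 2) ^ p) (Ici 0) := by
  intro x hx y _ hxy
  exact rpow_le_rpow_of_nonpos (by positivity) (by gcongr) hp

lemma hasDerivAt_mul_one_add_sq_rpow (q s : ℝ) :
    HasDerivAt (fun t : ℝ ↦ t * (1 + t ^ 2) ^ q)
      ((2 * q + 1) * (1 + s ^ 2) ^ q - 2 * q * (1 + s ^ 2) ^ (q - 1)) s := by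
  refine ((hasDerivAt_id' s).mul (hasDerivAt_one_add_sq_rpow q s)).congr_deriv ?_
  have hsplit : (1 + s ^ 2) ^ q = (1 + s ^ 2) ^ (q - 1) * (1 + s ^ 2) := by
    rw [← rpow_add_one (by positivity), sub_add_cancel]
  rw [hsplit]
  ring

lemma concaveOn_mul_one_add_sq_rpow {q : ℝ} (hq : -1 / 2 ≤ q) (hq₀ : q ≤ 0) :
    ConcaveOn ℝ (Ici 0) (fun s : ℝ ↦ s * (1 + s ^ 2) ^ q) := by
  have hderiv := hasDerivAt_mul_one_add_sq_rpow q
  refine AntitoneOn.concaveOn_of_deriv (convex_Ici 0)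
    (fun s _ ↦ (hderiv s).continuousAt.continuousWithinAt)
    (fun s _ ↦ (hderiv s).differentiableAt.differentiableWithinAt) ?_
  rw [interior_Ici, funext fun s ↦ (hderiv s).deriv]
  intro x hx y hy hxy
  replace hx := Ioi_subset_Ici_self hx
  replace hy := Ioi_subset_Ici_self hy
  have h₁ := antitoneOn_one_add_sq_rpow hq₀ hx hy hxy
  have h₂ := antitoneOn_one_add_sq_rpow (p := q - 1) (by linarith) hx hy hxy
  dsimp only at h₁ h₂ ⊢
  nlinarith

lemma trapezoid_le_one_add_sq_rpow_sub {p u v : ℝ} (hp : 1 / 2 ≤ p) (hp₁ : p ≤ 1) (hu : 0 ≤ u)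
    (huv : u ≤ v) :
    p * (v - u) * (v * (1 + v ^ 2) ^ (p - 1) + u * (1 + u ^ 2) ^ (p - 1))
      ≤ (1 + v ^ 2) ^ p - (1 + u ^ 2) ^ p := by
  have hconc : ConcaveOn ℝ (Icc u v) fun s : ℝ ↦ 2 * p * (s * (1 + s ^ 2) ^ (p - 1)) :=
    ((concaveOn_mul_one_add_sq_rpow (by linarith) (by linarith)).smul
      (by positivity : (0 : ℝ) ≤ 2 * p)).subset (fun s hs ↦ hu.trans hs.1) (convex_Icc u v)
  have := hconc.trapezoid_le_sub huv
    fun s _ ↦ (hasDerivAt_one_add_sq_rpow p s).congr_deriv (by ring)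
  linarith

/-- For `1 < γ ≤ 2` and `|u| ≤ v`, with `f(s) = (1+s²)^{γ/2}` one has
`f(v) − f(u) ≥ (γ/2)(v−u)(v(1+v²)^{γ/2−1} + u(1+u²)^{γ/2−1})`, i.e. the difference
quotient of `f` dominates the average of the endpoint derivatives. -/
theorem weight_difference_quotient_bound (γ u v : ℝ) (hγ1 : 1 < γ) (hγ2 : γ ≤ 2)
    (huv : |u| ≤ v) :
    γ / 2 * (v - u) * (v * (1 + v ^ 2) ^ (γ / 2 - 1) + u * (1 + u ^ 2) ^ (γ / 2 - 1))
      ≤ (1 + v ^ 2) ^ (γ / 2) - (1 + u ^ 2) ^ (γ / 2) := by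
  rcases le_or_gt 0 u with hu | hu
  · exact trapezoid_le_one_add_sq_rpow_sub (by linarith) (by linarith) hu
      ((le_abs_self u).trans huv)
  obtain ⟨b, rfl⟩ : ∃ b, u = -b := ⟨-u, by ring⟩
  rw [abs_neg] at huv
  have hb : 0 ≤ b := by linarith
  have hbv : b ≤ v := (le_abs_self b).trans huv
  have key := trapezoid_le_one_add_sq_rpow_sub (p := γ / 2) (by linarith) (by linarith) hb hbv
  have hw : (1 + v ^ 2) ^ (γ / 2 - 1) ≤ (1 + b ^ 2) ^ (γ / 2 - 1) :=
    antitoneOn_one_add_sq_rpow (by linarith) hb (hb.trans hbv) hbv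
  have hgap : 0 ≤ γ * (b * v * ((1 + b ^ 2) ^ (γ / 2 - 1) - (1 + v ^ 2) ^ (γ / 2 - 1))) :=
    mul_nonneg (by linarith) (mul_nonneg (mul_nonneg hb (hb.trans hbv)) (sub_nonneg.2 hw))
  rw [neg_sq]
  linarith
end

section
/- Let a ≥ b > 0, let τ ∈ [−1, 1], and let X, Y ≥ 0. Then ((1+τ)a + (1−τ)b) X² + ((1−τ)a + (1+τ)b) Y² − 2(a−b)√(1−τ²) X Y ≥ (2ab/((1−τ)a + (1+τ)b)) X² + (2ab/((1+τ)a + (1−τ)b)) Y². In particular, the left-hand quadratic form is nonnegative. -/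
open Real

/-- Algebraic positivity of the quadratic form arising in the
weighted energy flux through a backward light cone: for `a ≥ b > 0`, `τ ∈ [−1,1]`
and `X, Y ≥ 0`,
`((1+τ)a + (1−τ)b)X² + ((1−τ)a + (1+τ)b)Y² − 2(a−b)√(1−τ²)XY
  ≥ (2ab/((1−τ)a+(1+τ)b))X² + (2ab/((1+τ)a+(1−τ)b))Y² ≥ 0`. -/
theorem cone_flux_quadratic_positivity (a b τ X Y : ℝ) (hab : b ≤ a) (hb : 0 < b)
    (hτ1 : -1 ≤ τ) (hτ2 : τ ≤ 1) (hX : 0 ≤ X) (hY : 0 ≤ Y) :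
    2 * a * b / ((1 - τ) * a + (1 + τ) * b) * X ^ 2
        + 2 * a * b / ((1 + τ) * a + (1 - τ) * b) * Y ^ 2
      ≤ ((1 + τ) * a + (1 - τ) * b) * X ^ 2 + ((1 - τ) * a + (1 + τ) * b) * Y ^ 2
        - 2 * (a - b) * Real.sqrt (1 - τ ^ 2) * X * Y ∧
    0 ≤ ((1 + τ) * a + (1 - τ) * b) * X ^ 2 + ((1 - τ) * a + (1 + τ) * b) * Y ^ 2
        - 2 * (a - b) * Real.sqrt (1 - τ ^ 2) * X * Y := by
  have ha : 0 < a := lt_of_lt_of_le hb hab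
  set s := Real.sqrt (1 - τ ^ 2) with hs
  have hs0 : 0 ≤ s := Real.sqrt_nonneg _
  have hs2 : s ^ 2 = 1 - τ ^ 2 := Real.sq_sqrt (by nlinarith)
  set P := (1 - τ) * a + (1 + τ) * b with hPdef
  set Q := (1 + τ) * a + (1 - τ) * b with hQdef
  have hP : 0 < P := by
    rcases lt_or_ge τ 1 with h | h
    · have : 0 < (1 - τ) * a := mul_pos (by linarith) ha
      nlinarith
    · have hτ : τ = 1 := le_antisymm hτ2 h
      simp only [hPdef, hτ]; nlinarith
  have hQ : 0 < Q := by
    rcases lt_or_ge (-1 : ℝ) τ with h | h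
    · have : 0 < (1 + τ) * a := mul_pos (by linarith) ha
      nlinarith
    · have hτ : τ = -1 := le_antisymm h hτ1
      simp only [hQdef, hτ]; nlinarith
  have hPQ : 0 < P * Q - 2 * a * b := by nlinarith [sq_nonneg (a - b), hs2]
  have hA : 0 < Q * (P * Q - 2 * a * b) := mul_pos hQ hPQ
  -- SOS identity
  have hid : Q * (P * Q - 2 * a * b) *
      ((Q * X ^ 2 + P * Y ^ 2 - 2 * (a - b) * s * X * Y) * (P * Q)
        - (2 * a * b * X ^ 2 * Q + 2 * a * b * Y ^ 2 * P))
      = (Q * (P * Q - 2 * a * b) * X - (a - b) * s * P * Q * Y) ^ 2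
        + 4 * a ^ 2 * b ^ 2 * (P * Q) * Y ^ 2 := by
    simp only [hPdef, hQdef]
    linear_combination (-(a - b) ^ 2 * ((1 - τ) * a + (1 + τ) * b) ^ 2
      * ((1 + τ) * a + (1 - τ) * b) ^ 2 * Y ^ 2) * hs2
  have hAD : 0 ≤ (Q * (P * Q - 2 * a * b)) *
      ((Q * X ^ 2 + P * Y ^ 2 - 2 * (a - b) * s * X * Y) * (P * Q)
        - (2 * a * b * X ^ 2 * Q + 2 * a * b * Y ^ 2 * P)) := by
    rw [hid]
    have h4 : (0:ℝ) ≤ 4 * a ^ 2 * b ^ 2 * (P * Q) * Y ^ 2 := by positivity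
    positivity
  have hD : 0 ≤ (Q * X ^ 2 + P * Y ^ 2 - 2 * (a - b) * s * X * Y) * (P * Q)
      - (2 * a * b * X ^ 2 * Q + 2 * a * b * Y ^ 2 * P) :=
    nonneg_of_mul_nonneg_right hAD hA
  have h1 : 2 * a * b / P * X ^ 2 + 2 * a * b / Q * Y ^ 2
      ≤ Q * X ^ 2 + P * Y ^ 2 - 2 * (a - b) * s * X * Y := by
    rw [div_mul_eq_mul_div, div_mul_eq_mul_div, div_add_div _ _ hP.ne' hQ.ne',
      div_le_iff₀ (mul_pos hP hQ)]
    linarith [hD]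
  refine ⟨h1, le_trans ?_ h1⟩
  have hab' := mul_pos ha hb
  positivity
end
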